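/- Let N > 0 and α ∈ ℂ, and define for n ∈ ℕ: p_N(n|α) := (1/(N+1))·(N/(N+1))^n·exp(−|α|²/(N+1))·L_n(−|α|²/(N·(N+1))), where L_n(x) := Σ_{j=0}^n binom(n,j)·(−x)^j/j! is the n-th Laguerre polynomial. Then p_N(n|α) ≥ 0 for every n ∈ ℕ and Σ_{n=0}^∞ p_N(n|α) = 1; that is, p_N(·|α) is a probability distribution on ℕ. -/

import Mathlib

/-- The `n`-th Laguerre polynomial `L_n(x) = Σ_{j=0}^n binom(n,j)·(−x)^j/j!`. -/
noncomputable def laguerre (n : ℕ) (x : ℝ) : ℝ :=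
  ∑ j ∈ Finset.range (n + 1), (n.choose j : ℝ) * (-x) ^ j / (Nat.factorial j : ℝ)

/-- Photon-number distribution of a displaced thermal state with mean thermal photon
number `N` and displacement `α`. -/
noncomputable def pdisp (N : ℝ) (α : ℂ) (n : ℕ) : ℝ :=
  (1 / (N + 1)) * (N / (N + 1)) ^ n * Real.exp (-(‖α‖) ^ 2 / (N + 1)) *
    laguerre n (-(‖α‖) ^ 2 / (N * (N + 1)))

open Finset

/-! Expanding the Laguerre polynomial,
`q ^ n * L_n(-x) = Σ_{j + m = n} binom(n, j) q ^ n x ^ j / j!` is a sum of nonnegative terms,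
so the double series may be summed over `m` first. The negative binomial series gives
`Σ_m binom(j + m, j) q ^ (j + m) = q ^ j / (1 - q) ^ (j + 1)`, and what is left is an exponential
series: `Σ_n q ^ n L_n(-x) = exp (q x / (1 - q)) / (1 - q)`. At `q = N / (N + 1)` and
`x = |α|² / (N (N + 1))` this is `(N + 1) exp (|α|² / (N + 1))`, exactly the inverse of the
prefactor of `p_N(n|α)`. -/

theorem laguerre_neg_nonneg (n : ℕ) {x : ℝ} (hx : 0 ≤ x) : 0 ≤ laguerre n (-x) := by
  unfold laguerre
  rw [neg_neg]
  positivity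

theorem HasSum.sum_antidiagonal {α A : Type*} [AddCommMonoid α] [TopologicalSpace α]
    [ContinuousAdd α] [RegularSpace α] [AddMonoid A] [HasAntidiagonal A]
    {f : A × A → α} {a : α} (hf : HasSum f a) :
    HasSum (fun n ↦ ∑ p ∈ antidiagonal n, f p) a :=
  (HasAntidiagonal.sigmaAntidiagonalEquivProd.hasSum_iff.2 hf).sigma fun n ↦
    (antidiagonal n).hasSum f

theorem hasSum_prod_of_nonneg {β γ : Type*} {f : β × γ → ℝ} (hf : 0 ≤ f) {g : β → ℝ} {a : ℝ}
    (hfg : ∀ b, HasSum (fun c ↦ f (b, c)) (g b)) (hg : HasSum g a) : HasSum f a := by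
  have hs : Summable f := (summable_prod_of_nonneg hf).2
    ⟨fun b ↦ (hfg b).summable, by simpa only [(hfg _).tsum_eq] using hg.summable⟩
  exact (hs.hasSum.prod_fiberwise hfg).unique hg ▸ hs.hasSum

theorem hasSum_choose_mul_pow_add {𝕜 : Type*} [NormedField 𝕜] (j : ℕ) {q : 𝕜} (hq : ‖q‖ < 1) :
    HasSum (fun m ↦ ((j + m).choose j : 𝕜) * q ^ (j + m)) (q ^ j / (1 - q) ^ (j + 1)) := by
  have h := (hasSum_choose_mul_geometric_of_norm_lt_one j hq).mul_left (q ^ j)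
  rw [mul_one_div] at h
  exact h.congr_fun fun m ↦ by rw [add_comm j m, pow_add]; ring

theorem hasSum_pow_mul_laguerre_neg {q x : ℝ} (hq₀ : 0 ≤ q) (hq₁ : q < 1) (hx : 0 ≤ x) :
    HasSum (fun n ↦ q ^ n * laguerre n (-x)) (Real.exp (q * x / (1 - q)) / (1 - q)) := by
  set r := q * x / (1 - q)
  set F : ℕ × ℕ → ℝ := fun p ↦
    ((p.1 + p.2).choose p.1 : ℝ) * q ^ (p.1 + p.2) * x ^ p.1 / p.1.factorial
  have h1q : 1 - q ≠ 0 := by linarith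
  have hq : ‖q‖ < 1 := by rwa [Real.norm_of_nonneg hq₀]
  have hrow (j : ℕ) : HasSum (fun m ↦ F (j, m)) (r ^ j / j.factorial / (1 - q)) := by
    have h := (hasSum_choose_mul_pow_add j hq).mul_right (x ^ j / j.factorial)
    rw [show q ^ j / (1 - q) ^ (j + 1) * (x ^ j / j.factorial) = r ^ j / j.factorial / (1 - q) by
      rw [div_pow, mul_pow, pow_succ]; field_simp] at h
    exact h.congr_fun fun m ↦ by simp only [F]; ring
  have hcol : HasSum (fun j ↦ r ^ j / j.factorial / (1 - q)) (Real.exp r / (1 - q)) := by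
    rw [Real.exp_eq_exp_ℝ]
    exact (NormedSpace.expSeries_div_hasSum_exp r).div_const _
  refine (hasSum_prod_of_nonneg (fun p ↦ by positivity) hrow hcol).sum_antidiagonal.congr_fun
    fun n ↦ ?_
  rw [Nat.sum_antidiagonal_eq_sum_range_succ_mk, laguerre, mul_sum]
  refine sum_congr rfl fun j hj ↦ ?_
  simp only [F]
  rw [Nat.add_sub_cancel' (Nat.le_of_lt_succ (mem_range.1 hj)), neg_neg]
  ring

theorem pdisp_eq (N : ℝ) (α : ℂ) (n : ℕ) :
    pdisp N α n = Real.exp (-‖α‖ ^ 2 / (N + 1)) / (N + 1) *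
      ((N / (N + 1)) ^ n * laguerre n (-(‖α‖ ^ 2 / (N * (N + 1))))) := by
  rw [pdisp, neg_div (N * (N + 1))]
  ring

/-- `p_N(·|α)` is a probability distribution on `ℕ`: it is nonnegative, summable,
and sums to `1`. -/
theorem displaced_thermal_is_prob (N : ℝ) (hN : 0 < N) (α : ℂ) :
    (∀ n : ℕ, 0 ≤ pdisp N α n) ∧
    Summable (fun n : ℕ => pdisp N α n) ∧
    ∑' n : ℕ, pdisp N α n = 1 := by
  have hN₁ : 0 < N + 1 := by linarith
  have hx : 0 ≤ ‖α‖ ^ 2 / (N * (N + 1)) := by positivity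
  have hq₁ : N / (N + 1) < 1 := (div_lt_one hN₁).2 (lt_add_one N)
  have hsum : HasSum (pdisp N α) 1 := by
    have h := (hasSum_pow_mul_laguerre_neg (by positivity) hq₁ hx).mul_left
      (Real.exp (-‖α‖ ^ 2 / (N + 1)) / (N + 1))
    have h1q : 1 - N / (N + 1) = 1 / (N + 1) := by field_simp; ring
    have hr : N / (N + 1) * (‖α‖ ^ 2 / (N * (N + 1))) / (1 - N / (N + 1)) = ‖α‖ ^ 2 / (N + 1) := by
      rw [h1q]; field_simp
    rw [hr, h1q, div_mul_div_comm, ← Real.exp_add, ← add_div, neg_add_cancel, zero_div,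
      Real.exp_zero, mul_one_div_cancel hN₁.ne', div_one] at h
    exact h.congr_fun (pdisp_eq N α)
  refine ⟨fun n ↦ ?_, hsum.summable, hsum.tsum_eq⟩
  rw [pdisp_eq]
  have hL := laguerre_neg_nonneg n hx
  positivity
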